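/- arXiv:1505.07132 — 2 statements merged into one kernel-verified Lean document; each statement's English description precedes it below -/
import Mathlib

section
/- Let u be a C² solution of u'' + ((N-1)/r)u' + f(u) = 0 on (0,∞) with f continuous, F(s) = ∫₀ˢ f(t)dt, I(r) = |u'(r)|²/2 + F(u(r)), and H(r) = r^{2(N-1)} I(r). Suppose u is monotone decreasing on [r₁, z₁] with u(r₁) = β₁ > 0, u(z₁) = 0, F(s) ≤ 0 for s ∈ [0, β₁], and |u'(r)| ≤ K on [r₁, z₁]. Then H(z₁) ≤ r₁^{2N-3} ( r₁ I(r₁) - (2(N-1)/K) ∫₀^{β₁} |F(s)| ds ). -/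
/-!
Along the solution, the ODE gives `H' = 2(N-1) r^{2N-3} F(u) = -2(N-1) r^{2N-3} |F(u)|`, since
`u` stays in `[0, β₁]` where `F ≤ 0`. As `r ≥ r₁` and `0 ≤ -u' ≤ K`, this is at most
`c |F(u)| u'` with `c = 2(N-1) r₁^{2N-3} / K`, which is the derivative of `c G(u)` for `G` a
primitive of `|F|`. Comparing derivatives on `[r₁, z₁]` gives
`H(z₁) - H(r₁) ≤ c (G(0) - G(β₁)) = -c ∫₀^{β₁} |F|`.
-/

open Set

theorem hasDerivAt_weighted_energy {k : ℕ} {f F u u' : ℝ → ℝ} {r : ℝ} (hr : r ≠ 0)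
    (hF : HasDerivAt F (f (u r)) (u r)) (hu : HasDerivAt u (u' r) r)
    (hu' : HasDerivAt u' (-((k : ℝ) / r * u' r + f (u r))) r) :
    HasDerivAt (fun r => r ^ (2 * k) * (u' r ^ 2 / 2 + F (u r)))
      (2 * k * r ^ (2 * k - 1) * F (u r)) r := by
  have hI : HasDerivAt (fun r => u' r ^ 2 / 2 + F (u r)) (-((k : ℝ) / r * u' r ^ 2)) r := by
    refine (((hu'.fun_pow 2).div_const 2).fun_add (hF.comp r hu)).congr_deriv ?_
    field_simp
    ring
  refine ((hasDerivAt_pow (2 * k) r).fun_mul hI).congr_deriv ?_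
  rcases k with _ | k
  · simp
  · rw [show 2 * (k + 1) - 1 = 2 * k + 1 by omega, show 2 * (k + 1) = 2 * k + 1 + 1 by ring,
      pow_succ]
    field_simp
    push_cast
    ring

theorem sub_le_sub_of_hasDerivAt_le {f g f' g' : ℝ → ℝ} {a b : ℝ} (hab : a ≤ b)
    (hf : ∀ x ∈ Icc a b, HasDerivAt f (f' x) x) (hg : ∀ x ∈ Icc a b, HasDerivAt g (g' x) x)
    (hle : ∀ x ∈ Icc a b, f' x ≤ g' x) : f b - f a ≤ g b - g a := by
  have hanti : AntitoneOn (fun x => f x - g x) (Icc a b) :=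
    antitoneOn_of_hasDerivWithinAt_nonpos (f' := fun x => f' x - g' x) (convex_Icc a b)
      (fun x hx => ((hf x hx).sub (hg x hx)).continuousAt.continuousWithinAt)
      (fun x hx => ((hf x (interior_subset hx)).sub (hg x (interior_subset hx))).hasDerivWithinAt)
      (fun x hx => sub_nonpos.2 (hle x (interior_subset hx)))
  linarith [hanti (left_mem_Icc.2 hab) (right_mem_Icc.2 hab) hab]

theorem mul_le_div_mul_abs_mul {w w₀ K y v : ℝ} (hK : 0 < K) (hw₀ : 0 ≤ w₀) (hw : w₀ ≤ w)
    (hy : y ≤ 0) (hv : -K ≤ v) : w * y ≤ w₀ / K * (|y| * v) := by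
  rw [abs_of_nonpos hy]
  calc w * y ≤ w₀ * y := mul_le_mul_of_nonpos_right hw hy
    _ = w₀ / K * (-y * -K) := by field_simp
    _ ≤ w₀ / K * (-y * v) := by gcongr; linarith

theorem weighted_energy_drop_general
    (N : ℕ) (hN : 2 ≤ N) (f : ℝ → ℝ) (hf : Continuous f)
    (r₁ z₁ β₁ K : ℝ) (hr₁ : 0 < r₁) (hr₁z : r₁ < z₁)
    (hK : 0 < K)
    (u u' : ℝ → ℝ)
    (hu : ∀ r ∈ Icc r₁ z₁, HasDerivAt u (u' r) r)
    (hode : ∀ r ∈ Icc r₁ z₁,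
      HasDerivAt u' (-(((N:ℝ) - 1) / r * u' r + f (u r))) r)
    (hanti : AntitoneOn u (Icc r₁ z₁))
    (hur₁ : u r₁ = β₁) (huz₁ : u z₁ = 0)
    (hFneg : ∀ s ∈ Icc (0:ℝ) β₁, (∫ t in (0:ℝ)..s, f t) ≤ 0)
    (hbound : ∀ r ∈ Icc r₁ z₁, |u' r| ≤ K) :
    z₁ ^ (2 * (N - 1)) * ((u' z₁) ^ 2 / 2 + ∫ t in (0:ℝ)..(u z₁), f t) ≤
      r₁ ^ (2 * N - 3) *
        (r₁ * ((u' r₁) ^ 2 / 2 + ∫ t in (0:ℝ)..(u r₁), f t) -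
          2 * ((N:ℝ) - 1) / K * ∫ s in (0:ℝ)..β₁, |∫ t in (0:ℝ)..s, f t|) := by
  set F : ℝ → ℝ := fun s => ∫ t in (0:ℝ)..s, f t
  have hNk : ((N - 1 : ℕ) : ℝ) = (N : ℝ) - 1 := by
    rw [Nat.cast_sub (by omega), Nat.cast_one]
  have hN₀ : 0 ≤ 2 * ((N : ℝ) - 1) := by
    rw [← hNk]
    positivity
  have hFc : Continuous F :=
    intervalIntegral.continuous_primitive (fun _ _ => hf.intervalIntegrable _ _) 0
  have hH : ∀ r ∈ Icc r₁ z₁, HasDerivAt (fun r => r ^ (2 * (N - 1)) * (u' r ^ 2 / 2 + F (u r)))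
      (2 * ((N : ℝ) - 1) * r ^ (2 * N - 3) * F (u r)) r := fun r hr => by
    have := hasDerivAt_weighted_energy (hr₁.trans_le hr.1).ne'
      (hf.integral_hasStrictDerivAt 0 (u r)).hasDerivAt (hu r hr) (hNk ▸ hode r hr)
    rwa [hNk, show 2 * (N - 1) - 1 = 2 * N - 3 by omega] at this
  have hG : ∀ r ∈ Icc r₁ z₁,
      HasDerivAt (fun r => 2 * ((N : ℝ) - 1) * r₁ ^ (2 * N - 3) / K * ∫ t in (0:ℝ)..u r, |F t|)
        (2 * ((N : ℝ) - 1) * r₁ ^ (2 * N - 3) / K * (|F (u r)| * u' r)) r := fun r hr =>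
    ((hFc.abs.integral_hasStrictDerivAt 0 (u r)).hasDerivAt.comp r (hu r hr)).const_mul _
  have hu_mem : ∀ r ∈ Icc r₁ z₁, u r ∈ Icc 0 β₁ := fun r hr =>
    ⟨huz₁ ▸ hanti hr (right_mem_Icc.2 hr₁z.le) hr.2, hur₁ ▸ hanti (left_mem_Icc.2 hr₁z.le) hr hr.1⟩
  have hdrop := sub_le_sub_of_hasDerivAt_le hr₁z.le hH hG fun r hr =>
    mul_le_div_mul_abs_mul hK (mul_nonneg hN₀ (by positivity))
      (mul_le_mul_of_nonneg_left (pow_le_pow_left₀ hr₁.le hr.1 _) hN₀)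
      (hFneg _ (hu_mem r hr)) (neg_le_of_abs_le (hbound r hr))
  simp only [F, hur₁, huz₁, intervalIntegral.integral_same, mul_zero] at hdrop ⊢
  rw [show 2 * (N - 1) = 2 * N - 3 + 1 by omega] at hdrop ⊢
  linear_combination hdrop

/-- Weighted energy drop across the interval where u decreases from β₁ to 0:
H(z₁) ≤ r₁^{2N-3}( r₁ I(r₁) - (2(N-1)/K) ∫₀^{β₁} |F(s)| ds ). -/
theorem weighted_energy_drop
    (N : ℕ) (hN : 2 ≤ N) (f : ℝ → ℝ) (hf : Continuous f)
    (r₁ z₁ β₁ K : ℝ) (hr₁ : 0 < r₁) (hr₁z : r₁ < z₁)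
    (hβ₁ : 0 < β₁) (hK : 0 < K)
    (u u' : ℝ → ℝ)
    (hu : ∀ r ∈ Icc r₁ z₁, HasDerivAt u (u' r) r)
    (hode : ∀ r ∈ Icc r₁ z₁,
      HasDerivAt u' (-(((N:ℝ) - 1) / r * u' r + f (u r))) r)
    (hanti : AntitoneOn u (Icc r₁ z₁))
    (hur₁ : u r₁ = β₁) (huz₁ : u z₁ = 0)
    (hFneg : ∀ s ∈ Icc (0:ℝ) β₁, (∫ t in (0:ℝ)..s, f t) ≤ 0)
    (hbound : ∀ r ∈ Icc r₁ z₁, |u' r| ≤ K) :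
    z₁ ^ (2 * (N - 1)) * ((u' z₁) ^ 2 / 2 + ∫ t in (0:ℝ)..(u z₁), f t) ≤
      r₁ ^ (2 * N - 3) *
        (r₁ * ((u' r₁) ^ 2 / 2 + ∫ t in (0:ℝ)..(u r₁), f t) -
          2 * ((N:ℝ) - 1) / K * ∫ s in (0:ℝ)..β₁, |∫ t in (0:ℝ)..s, f t|) :=
  weighted_energy_drop_general N hN f hf r₁ z₁ β₁ K hr₁ hr₁z hK u u' hu hode hanti hur₁ huz₁ hFneg
    hbound
end

section
/- Let f be continuous with primitive F, Q(s) = 2N F(s) - (N-2) s f(s), N ≥ 2, and u a C² solution of u'' + ((N-1)/r)u' + f(u) = 0 on [0,R] with u(0)=α, u'(0)=0. Suppose Q(u(t)) ≥ -Q̄ for all t ∈ [0,R] (with Q̄ ≥ 0). Then for E(r) = 2r^N I(r) + (N-2) r^{N-1} u'(r) u(r), one has E(r) ≥ E(r₀) - Q̄ (r^N - r₀^N)/N for all 0 ≤ r₀ ≤ r ≤ R. -/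
/-!
Differentiating `E` and eliminating `u''` with the equation gives `E'(r) = r^(N-1) Q(u(r))` for
`r > 0`. Hence `E(r) + Q̄ r^N / N` has derivative `r^(N-1) (Q(u(r)) + Q̄) ≥ 0` on `(0, R)`; being
continuous on `[0, R]`, it is nondecreasing there.
-/

open Set

noncomputable def pohozaevQ (N : ℕ) (f : ℝ → ℝ) (s : ℝ) : ℝ :=
  2 * (N:ℝ) * (∫ t in (0:ℝ)..s, f t) - ((N:ℝ) - 2) * s * f s

noncomputable def pohozaevEnergy (N : ℕ) (f u u' : ℝ → ℝ) (r : ℝ) : ℝ :=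
  2 * r ^ N * ((u' r) ^ 2 / 2 + ∫ s in (0:ℝ)..(u r), f s)
    + ((N:ℝ) - 2) * r ^ (N - 1) * u' r * u r

-- Stated without the exponent `n - 1`, which would truncate at `n = 0`.
theorem hasDerivAt_pow_of_ne_zero (n : ℕ) {r : ℝ} (hr : r ≠ 0) :
    HasDerivAt (fun x : ℝ => x ^ n) (n * r ^ n / r) r := by
  refine (hasDerivAt_pow n r).congr_deriv ?_
  rcases n with _ | n
  · simp
  · rw [pow_succ]
    field_simp
    simp

theorem hasDerivAt_pow_div_natCast {N : ℕ} (hN : N ≠ 0) (r : ℝ) :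
    HasDerivAt (fun x : ℝ => x ^ N / N) (r ^ (N - 1)) r := by
  refine ((hasDerivAt_pow N r).div_const (N:ℝ)).congr_deriv ?_
  have : (N:ℝ) ≠ 0 := by exact_mod_cast hN
  field_simp

section

variable {N : ℕ} {f u u' : ℝ → ℝ}

theorem continuousOn_pohozaevEnergy {s : Set ℝ} (hf : Continuous f) (hu : ContinuousOn u s)
    (hu' : ContinuousOn u' s) : ContinuousOn (pohozaevEnergy N f u u') s := by
  have hF : Continuous fun x : ℝ => ∫ t in (0:ℝ)..x, f t :=
    intervalIntegral.continuous_primitive (fun a b => hf.intervalIntegrable a b) 0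
  unfold pohozaevEnergy
  fun_prop

theorem hasDerivAt_pohozaevEnergy (hN : 1 ≤ N) (hf : Continuous f) {r : ℝ} (hr : r ≠ 0)
    (hu : HasDerivAt u (u' r) r)
    (hu' : HasDerivAt u' (-(((N:ℝ) - 1) / r * u' r + f (u r))) r) :
    HasDerivAt (pohozaevEnergy N f u u') (r ^ (N - 1) * pohozaevQ N f (u r)) r := by
  have hF : HasDerivAt (fun x : ℝ => ∫ t in (0:ℝ)..x, f t) (f (u r)) (u r) :=
    intervalIntegral.integral_hasDerivAt_right (hf.intervalIntegrable _ _)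
      (hf.stronglyMeasurableAtFilter _ _) hf.continuousAt
  have hE := ((hasDerivAt_pow_of_ne_zero N hr).const_mul 2).mul
      (((hu'.pow 2).div_const 2).add (hF.comp r hu)) |>.add
    ((((hasDerivAt_pow_of_ne_zero (N - 1) hr).const_mul ((N:ℝ) - 2)).mul hu').mul hu)
  refine hE.congr_deriv ?_
  obtain ⟨n, rfl⟩ : ∃ n, N = n + 1 := ⟨N - 1, by omega⟩
  simp only [pohozaevQ, Pi.add_apply, Pi.mul_apply, Pi.pow_apply, Function.comp_apply,
    Nat.add_sub_cancel, pow_succ]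
  push_cast
  field_simp
  ring

theorem monotoneOn_pohozaevEnergy_add (hN : 1 ≤ N) (hf : Continuous f) {R Qbar : ℝ}
    (hu : ∀ r ∈ Icc 0 R, HasDerivAt u (u' r) r)
    (hu'cont : ContinuousOn u' (Icc 0 R))
    (hode : ∀ r ∈ Ioo 0 R, HasDerivAt u' (-(((N:ℝ) - 1) / r * u' r + f (u r))) r)
    (hQ : ∀ r ∈ Ioo 0 R, -Qbar ≤ pohozaevQ N f (u r)) :
    MonotoneOn (fun r => pohozaevEnergy N f u u' r + Qbar * (r ^ N / N)) (Icc 0 R) := by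
  have hucont : ContinuousOn u (Icc 0 R) := fun r hr => (hu r hr).continuousAt.continuousWithinAt
  refine monotoneOn_of_hasDerivWithinAt_nonneg
    (f' := fun r => r ^ (N - 1) * (pohozaevQ N f (u r) + Qbar))
    (convex_Icc 0 R) ((continuousOn_pohozaevEnergy hf hucont hu'cont).add (by fun_prop))
    (fun r hr => ?_) (fun r hr => ?_)
  all_goals rw [interior_Icc] at hr
  · have hQbar := (hasDerivAt_pow_div_natCast (N := N) (by omega) r).const_mul Qbar
    exact ((hasDerivAt_pohozaevEnergy hN hf hr.1.ne' (hu r (Ioo_subset_Icc_self hr))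
      (hode r hr)).add hQbar).congr_deriv (by ring) |>.hasDerivWithinAt
  · exact mul_nonneg (pow_nonneg hr.1.le _) (by linarith [hQ r hr])

end

theorem pohozaev_energy_lower_bound_general
    (N : ℕ) (hN : 2 ≤ N) (f : ℝ → ℝ) (hf : Continuous f)
    (R Qbar : ℝ)
    (u u' : ℝ → ℝ)
    (hu : ∀ r ∈ Icc (0:ℝ) R, HasDerivAt u (u' r) r)
    (hode : ∀ r ∈ Ioc (0:ℝ) R,
      HasDerivAt u' (-(((N:ℝ) - 1) / r * u' r + f (u r))) r)
    (hu'cont : ContinuousOn u' (Icc (0:ℝ) R))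
    (hQ : ∀ t ∈ Icc (0:ℝ) R,
      -Qbar ≤ 2 * (N:ℝ) * (∫ s in (0:ℝ)..(u t), f s) - ((N:ℝ) - 2) * u t * f (u t)) :
    ∀ r₀ r : ℝ, 0 ≤ r₀ → r₀ ≤ r → r ≤ R →
      (2 * r₀ ^ N * ((u' r₀) ^ 2 / 2 + ∫ s in (0:ℝ)..(u r₀), f s)
        + ((N:ℝ) - 2) * r₀ ^ (N - 1) * u' r₀ * u r₀)
        - Qbar * (r ^ N - r₀ ^ N) / N ≤
      2 * r ^ N * ((u' r) ^ 2 / 2 + ∫ s in (0:ℝ)..(u r), f s)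
        + ((N:ℝ) - 2) * r ^ (N - 1) * u' r * u r := by
  intro r₀ r hr₀ hr₀r hrR
  have hmono := monotoneOn_pohozaevEnergy_add (by omega) hf hu hu'cont
    (fun r hr => hode r (Ioo_subset_Ioc_self hr)) (fun r hr => hQ r (Ioo_subset_Icc_self hr))
  have key : pohozaevEnergy N f u u' r₀ + Qbar * (r₀ ^ N / N)
      ≤ pohozaevEnergy N f u u' r + Qbar * (r ^ N / N) :=
    hmono ⟨hr₀, hr₀r.trans hrR⟩ ⟨hr₀.trans hr₀r, hrR⟩ hr₀r
  change pohozaevEnergy N f u u' r₀ - Qbar * (r ^ N - r₀ ^ N) / N ≤ pohozaevEnergy N f u u' r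
  rw [show Qbar * (r ^ N - r₀ ^ N) / N = Qbar * (r ^ N / N) - Qbar * (r₀ ^ N / N) by ring]
  linarith

/-- Pohozaev energy lower bound: if Q(u(t)) ≥ -Q̄ on [0,R], then
E(r) ≥ E(r₀) - Q̄ (r^N - r₀^N)/N. -/
theorem pohozaev_energy_lower_bound
    (N : ℕ) (hN : 2 ≤ N) (f : ℝ → ℝ) (hf : Continuous f)
    (R α Qbar : ℝ) (hR : 0 < R) (hQbar : 0 ≤ Qbar)
    (u u' : ℝ → ℝ)
    (hu : ∀ r ∈ Icc (0:ℝ) R, HasDerivAt u (u' r) r)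
    (hode : ∀ r ∈ Ioc (0:ℝ) R,
      HasDerivAt u' (-(((N:ℝ) - 1) / r * u' r + f (u r))) r)
    (hu'cont : ContinuousOn u' (Icc (0:ℝ) R))
    (hu0 : u 0 = α) (hu'0 : u' 0 = 0)
    (hQ : ∀ t ∈ Icc (0:ℝ) R,
      -Qbar ≤ 2 * (N:ℝ) * (∫ s in (0:ℝ)..(u t), f s) - ((N:ℝ) - 2) * u t * f (u t)) :
    ∀ r₀ r : ℝ, 0 ≤ r₀ → r₀ ≤ r → r ≤ R →
      (2 * r₀ ^ N * ((u' r₀) ^ 2 / 2 + ∫ s in (0:ℝ)..(u r₀), f s)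
        + ((N:ℝ) - 2) * r₀ ^ (N - 1) * u' r₀ * u r₀)
        - Qbar * (r ^ N - r₀ ^ N) / N ≤
      2 * r ^ N * ((u' r) ^ 2 / 2 + ∫ s in (0:ℝ)..(u r), f s)
        + ((N:ℝ) - 2) * r ^ (N - 1) * u' r * u r :=
  pohozaev_energy_lower_bound_general N hN f hf R Qbar u u' hu hode hu'cont hQ
end
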